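/- If x has s runs with final run of length j, and y has t runs with final run of length k, then dtw(x, y) = min(SP(x, y, s, t, k), SP(y, x, t, s, j)). -/

import Mathlib

open scoped BigOperators

variable {α : Type*}

/-- `xb` is the expansion of `x` obtained by replacing the `i`-th letter of `x`
with `ks[i] ≥ 1` consecutive copies of itself (equivalently, by extending runs). -/
def IsExpansionWith (x : List α) (ks : List ℕ) (xb : List α) : Prop :=
  ks.length = x.length ∧ (∀ k ∈ ks, 1 ≤ k) ∧
    xb = (x.zip ks).flatMap fun p => List.replicate p.2 p.1

/-- `xb` is an expansion of `x` (obtained by extending runs). -/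
def IsExpansion (x xb : List α) : Prop := ∃ ks, IsExpansionWith x ks xb

/-- The cost of a correspondence: sum of pointwise distances. -/
def corrCost (d : α → α → ℝ) (xb yb : List α) : ℝ :=
  ((xb.zip yb).map fun p => d p.1 p.2).sum

/-- A correspondence between `x` and `y`: a pair of equal-length expansions. -/
def IsCorrespondence (x y xb yb : List α) : Prop :=
  IsExpansion x xb ∧ IsExpansion y yb ∧ xb.length = yb.length

/-- Dynamic time warping distance: minimum cost of a correspondence. -/
noncomputable def dtw (d : α → α → ℝ) (x y : List α) : ℝ :=
  sInf {c | ∃ xb yb, IsCorrespondence x y xb yb ∧ c = corrCost d xb yb}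

/-- The maximal runs of equal letters of a list. -/
def runsOf [DecidableEq α] (x : List α) : List (List α) := x.splitBy (· == ·)

/-- Number of runs. -/
def numRuns [DecidableEq α] (x : List α) : ℕ := (runsOf x).length

/-- Length of the final run. -/
def lastRunLen [DecidableEq α] (x : List α) : ℕ := ((runsOf x).getLastD []).length

/-- Length of the `i`-th run (0-indexed). -/
def runLen [DecidableEq α] (x : List α) (i : ℕ) : ℕ := ((runsOf x).getD i []).length

/-- The letter populating the `i`-th run (0-indexed). -/
def runLetter [DecidableEq α] [Inhabited α] (x : List α) (i : ℕ) : α :=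
  ((runsOf x).getD i []).headI

/-- The concatenation of the first `k` runs of `x`. -/
def firstRuns [DecidableEq α] (k : ℕ) (x : List α) : List α := ((runsOf x).take k).flatten

/-- The prefix of `y` consisting of its first `ry` runs, up through the `oy`-th
letter of the `ry`-th run (runs are 1-indexed here). -/
def runPrefix [DecidableEq α] (ry oy : ℕ) (y : List α) : List α :=
  firstRuns (ry - 1) y ++ ((runsOf y).getD (ry - 1) []).take oy

/-- The subproblem `SP(x, y, rx, ry, oy)`: the minimum cost of a correspondence
between the first `rx` runs of `x` and the prefix of `y` ending at the `oy`-th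
letter of its `ry`-th run, under the constraint that the final (`ry`-th) run of
the `y`-prefix is not extended; `⊤` if no such correspondence exists. -/
noncomputable def SP [DecidableEq α] (d : α → α → ℝ) (x y : List α) (rx ry oy : ℕ) : EReal :=
  sInf ((fun p : List α × List α => ((corrCost d p.1 p.2 : ℝ) : EReal)) ''
    {p | IsCorrespondence (firstRuns rx x) (runPrefix ry oy y) p.1 p.2 ∧
         (0 < oy → lastRunLen p.2 = oy)})

/-- Generalized edit distance over a metric with null character `nul`:
insertion/deletion of `l` costs `d nul l`, substitution of `l` by `l'` costs `d l l'`. -/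
noncomputable def ged (d : α → α → ℝ) (nul : α) : List α → List α → ℝ
  | [], [] => 0
  | [], b :: ys => d nul b + ged d nul [] ys
  | a :: xs, [] => d nul a + ged d nul xs []
  | a :: xs, b :: ys =>
      min (d a b + ged d nul xs ys)
        (min (d nul a + ged d nul xs (b :: ys)) (d nul b + ged d nul (a :: xs) ys))
  termination_by x y => x.length + y.length

/-- Simple (Hamming/Levenshtein) edit distance: unit-cost insertions, deletions
and substitutions. -/
def edH [DecidableEq α] : List α → List α → ℕ
  | [], ys => ys.length
  | xs, [] => xs.length
  | a :: xs, b :: ys =>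
      min ((if a = b then 0 else 1) + edH xs ys)
        (min (1 + edH xs (b :: ys)) (1 + edH (a :: xs) ys))
  termination_by x y => x.length + y.length

/-- Simple edit distance with only unit-cost insertions and deletions. -/
def edS [DecidableEq α] : List α → List α → ℕ
  | [], ys => ys.length
  | xs, [] => xs.length
  | a :: xs, b :: ys =>
      if a = b then
        min (edS xs ys) (min (1 + edS xs (b :: ys)) (1 + edS (a :: xs) ys))
      else
        min (1 + edS xs (b :: ys)) (1 + edS (a :: xs) ys)
  termination_by x y => x.length + y.length

/-- The padded string `p(x) = ∅ x₁ ∅ x₂ ∅ ⋯ xₙ ∅`. -/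
def pad (nul : α) (x : List α) : List α := nul :: x.flatMap fun a => [a, nul]

/-- The `r`-simplification for edit distance: remove all letters of magnitude at most `r`. -/
noncomputable def sEd [MetricSpace α] (nul : α) (r : ℝ) (x : List α) : List α :=
  x.filter fun l => decide (r < dist nul l)

/-!
If both final runs of a correspondence are extended, dropping the last letter of each
expansion leaves a correspondence of `x` and `y` and removes one nonnegative term from the
cost. Iterating, every correspondence is dominated by one that leaves the final run of `x` or
of `y` unextended; such a correspondence is admissible for `SP(x, y, s, t, k)` or, the cost
being symmetric, for `SP(y, x, t, s, j)`. Conversely both subproblems range over correspondences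
of `x` and `y` themselves, since the full prefixes of a word are the word.
-/

open List

section Expansion

variable {x u v xb yb : List α} {ks : List ℕ} {a : α} {n S : ℕ}

theorem IsExpansionWith.length_eq_sum (h : IsExpansionWith x ks xb) : xb.length = ks.sum := by
  obtain ⟨hlen, -, rfl⟩ := h
  simp only [length_flatMap, length_replicate]
  exact congrArg sum (map_snd_zip hlen.le)

theorem IsExpansion.length_le (h : IsExpansion x xb) : x.length ≤ xb.length := by
  obtain ⟨ks, hks⟩ := h
  rw [hks.length_eq_sum, ← hks.1]
  exact length_le_sum_of_one_le ks hks.2.1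

theorem IsExpansion.ne_nil (hx : x ≠ []) (h : IsExpansion x xb) : xb ≠ [] := by
  rw [← length_pos_iff] at hx ⊢
  exact hx.trans_le h.length_le

theorem isExpansion_append_iff :
    IsExpansion (u ++ v) xb ↔
      ∃ ub vb, xb = ub ++ vb ∧ IsExpansion u ub ∧ IsExpansion v vb := by
  constructor
  · rintro ⟨ks, hlen, hpos, rfl⟩
    refine ⟨_, _, ?_,
      ⟨ks.take u.length, by simp [hlen], fun k hk => hpos k (mem_of_mem_take hk), rfl⟩,
      ⟨ks.drop u.length, by simp [hlen], fun k hk => hpos k (mem_of_mem_drop hk), rfl⟩⟩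
    rw [← flatMap_append, ← zip_append (by simp [hlen]), take_append_drop]
  · rintro ⟨ub, vb, rfl, ⟨ks, hks, hkpos, rfl⟩, ⟨ls, hls, hlpos, rfl⟩⟩
    refine ⟨ks ++ ls, by simp [hks, hls], ?_, by rw [zip_append hks.symm, flatMap_append]⟩
    simpa [or_imp, forall_and] using ⟨hkpos, hlpos⟩

theorem flatMap_zip_replicate_left (hlen : ks.length = n) :
    ((replicate n a).zip ks).flatMap (fun p => replicate p.2 p.1) = replicate ks.sum a := by
  subst hlen
  induction ks with
  | nil => rfl
  | cons k ks ih => simp [replicate_succ, ih, sum_cons]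

theorem IsExpansion.replicate_left (h : IsExpansion (replicate n a) yb) :
    ∃ S, n ≤ S ∧ yb = replicate S a := by
  obtain ⟨ks, hlen, hpos, rfl⟩ := h
  rw [length_replicate] at hlen
  exact ⟨ks.sum, hlen ▸ length_le_sum_of_one_le ks hpos, flatMap_zip_replicate_left hlen⟩

theorem IsExpansion.getLast?_eq (h : IsExpansion x xb) : xb.getLast? = x.getLast? := by
  rcases eq_nil_or_concat x with rfl | ⟨x', b, rfl⟩
  · obtain ⟨ks, -, -, rfl⟩ := h
    simp
  rw [concat_eq_append] at h
  obtain ⟨ub, vb, rfl, -, hb⟩ := isExpansion_append_iff.1 h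
  obtain ⟨S, hS, rfl⟩ := IsExpansion.replicate_left (n := 1) hb
  simp [getLast?_append, getLast?_replicate, Nat.one_le_iff_ne_zero.1 hS]

theorem isExpansion_replicate (hn : n ≠ 0) (hS : n ≤ S) :
    IsExpansion (replicate n a) (replicate S a) := by
  have hlen : ((S - (n - 1)) :: replicate (n - 1) 1).length = n := by
    rw [length_cons, length_replicate]
    omega
  refine ⟨_, hlen.trans length_replicate.symm, ?_, ?_⟩
  · simp only [mem_cons, mem_replicate]
    omega
  · rw [flatMap_zip_replicate_left hlen, sum_cons, sum_replicate, smul_eq_mul, mul_one]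
    congr 1
    omega

end Expansion

theorem List.exists_eq_append_replicate {x : List α} (hx : x ≠ []) :
    ∃ w a n, n ≠ 0 ∧ w.getLast? ≠ some a ∧ x = w ++ replicate n a := by
  induction x using reverseRecOn with
  | nil => exact absurd rfl hx
  | append_singleton x b ih =>
    rcases eq_or_ne x [] with rfl | hx'
    · exact ⟨[], b, 1, one_ne_zero, by simp, rfl⟩
    obtain ⟨w, a, n, hn, hw, rfl⟩ := ih hx'
    by_cases hab : a = b
    · subst hab
      exact ⟨w, a, n + 1, n.succ_ne_zero, hw, by simp [replicate_succ', append_assoc]⟩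
    · exact ⟨w ++ replicate n a, b, 1, one_ne_zero,
        by simp [getLast?_append, getLast?_replicate, hn, hab], rfl⟩

section Runs

variable [DecidableEq α] {x w xb : List α} {a : α} {n : ℕ}

theorem lastRunLen_append_replicate (hn : n ≠ 0) (hw : w.getLast? ≠ some a) :
    lastRunLen (w ++ replicate n a) = n := by
  have hsplit :
      (w ++ replicate n a).splitBy (· == ·) = w.splitBy (· == ·) ++ [replicate n a] := by
    rw [splitBy_append,
      splitBy_of_isChain (by simpa using hn) (isChain_replicate_of_rel n (by simp))]
    intro b hb c hc
    rw [head?_replicate, if_neg hn, Option.mem_some_iff] at hc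
    subst hc
    exact beq_false_of_ne fun h => hw (h ▸ hb)
  simp [lastRunLen, runsOf, hsplit]

theorem lastRunLen_pos (hx : x ≠ []) : 0 < lastRunLen x := by
  obtain ⟨w, a, n, hn, hw, rfl⟩ := exists_eq_append_replicate hx
  rw [lastRunLen_append_replicate hn hw]
  exact Nat.pos_of_ne_zero hn

theorem IsExpansion.exists_lastRun (hx : x ≠ []) (h : IsExpansion x xb) :
    ∃ w wb a, IsExpansion w wb ∧ lastRunLen x ≤ lastRunLen xb ∧
      x = w ++ replicate (lastRunLen x) a ∧ xb = wb ++ replicate (lastRunLen xb) a := by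
  obtain ⟨w, a, n, hn, hw, rfl⟩ := exists_eq_append_replicate hx
  obtain ⟨wb, vb, rfl, hwb, hvb⟩ := isExpansion_append_iff.1 h
  obtain ⟨S, hS, rfl⟩ := hvb.replicate_left
  have hwb' : wb.getLast? ≠ some a := hwb.getLast?_eq ▸ hw
  rw [lastRunLen_append_replicate hn hw, lastRunLen_append_replicate (by omega) hwb']
  exact ⟨w, wb, a, hwb, hS, rfl, rfl⟩

theorem IsExpansion.lastRunLen_le (hx : x ≠ []) (h : IsExpansion x xb) :
    lastRunLen x ≤ lastRunLen xb := by
  obtain ⟨-, -, -, -, hle, -⟩ := h.exists_lastRun hx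
  exact hle

theorem IsExpansion.dropLast (hx : x ≠ []) (h : IsExpansion x xb)
    (hlt : lastRunLen x < lastRunLen xb) : IsExpansion x xb.dropLast := by
  obtain ⟨w, wb, a, hwb, -, hx', hxb⟩ := h.exists_lastRun hx
  rw [hxb, dropLast_append_of_ne_nil (mt (replicate_eq_nil_iff _).1 (by omega)), dropLast_replicate,
    hx']
  exact isExpansion_append_iff.2
    ⟨wb, _, rfl, hwb, isExpansion_replicate (lastRunLen_pos hx).ne' (by omega)⟩

end Runs

section Correspondence

variable {d : α → α → ℝ} {x y xb yb : List α}

theorem corrCost_nonneg (hd : ∀ a b, 0 ≤ d a b) (xb yb : List α) : 0 ≤ corrCost d xb yb :=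
  sum_nonneg fun _ hr => by
    obtain ⟨p, -, rfl⟩ := mem_map.1 hr
    exact hd _ _

theorem corrCost_comm (hd : ∀ a b, d a b = d b a) (xb yb : List α) :
    corrCost d xb yb = corrCost d yb xb := by
  rw [corrCost, corrCost, ← zip_swap, map_map]
  simp only [Function.comp_def, Prod.fst_swap, Prod.snd_swap, hd]

theorem corrCost_append_singleton (hlen : xb.length = yb.length) (a b : α) :
    corrCost d (xb ++ [a]) (yb ++ [b]) = corrCost d xb yb + d a b := by
  simp [corrCost, zip_append hlen]

theorem corrCost_dropLast_le (hd : ∀ a b, 0 ≤ d a b) (hlen : xb.length = yb.length) :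
    corrCost d xb.dropLast yb.dropLast ≤ corrCost d xb yb := by
  rcases eq_nil_or_concat xb with rfl | ⟨xb, a, rfl⟩
  · simp [corrCost]
  rcases eq_nil_or_concat yb with rfl | ⟨yb, b, rfl⟩
  · simp at hlen
  simp only [concat_eq_append, length_append, length_singleton, add_left_inj] at hlen ⊢
  rw [dropLast_concat, dropLast_concat, corrCost_append_singleton hlen]
  exact le_add_of_nonneg_right (hd a b)

theorem IsCorrespondence.symm (h : IsCorrespondence x y xb yb) : IsCorrespondence y x yb xb :=
  ⟨h.2.1, h.1, h.2.2.symm⟩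

theorem exists_isCorrespondence (hx : x ≠ []) (hy : y ≠ []) :
    ∃ xb yb, IsCorrespondence x y xb yb := by
  have hx' := length_pos_iff.2 hx
  have hy' := length_pos_iff.2 hy
  have hex : IsExpansionWith x (replicate x.length y.length) _ :=
    ⟨length_replicate, fun k hk => (eq_of_mem_replicate hk).symm ▸ hy', rfl⟩
  have hey : IsExpansionWith y (replicate y.length x.length) _ :=
    ⟨length_replicate, fun k hk => (eq_of_mem_replicate hk).symm ▸ hx', rfl⟩
  refine ⟨_, _, ⟨_, hex⟩, ⟨_, hey⟩, ?_⟩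
  rw [hex.length_eq_sum, hey.length_eq_sum, sum_replicate, sum_replicate, smul_eq_mul, smul_eq_mul,
    Nat.mul_comm]

theorem dtw_le_corrCost (hd : ∀ a b, 0 ≤ d a b) (h : IsCorrespondence x y xb yb) :
    dtw d x y ≤ corrCost d xb yb :=
  csInf_le ⟨0, by rintro _ ⟨xb, yb, -, rfl⟩; exact corrCost_nonneg hd xb yb⟩
    ⟨xb, yb, h, rfl⟩

theorem le_dtw (hx : x ≠ []) (hy : y ≠ []) {e : EReal}
    (h : ∀ xb yb, IsCorrespondence x y xb yb → e ≤ corrCost d xb yb) : e ≤ dtw d x y := by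
  obtain ⟨xb₀, yb₀, h₀⟩ := exists_isCorrespondence hx hy
  induction e using EReal.rec with
  | bot => exact bot_le
  | top => exact absurd (h xb₀ yb₀ h₀) (by simp)
  | coe e =>
    refine EReal.coe_le_coe_iff.2 (le_csInf ⟨_, xb₀, yb₀, h₀, rfl⟩ ?_)
    rintro _ ⟨xb, yb, hc, rfl⟩
    exact EReal.coe_le_coe_iff.1 (h xb yb hc)

theorem dtw_comm (hd : ∀ a b, d a b = d b a) (x y : List α) : dtw d x y = dtw d y x := by
  unfold dtw
  congr 1
  ext c
  constructor <;>
  · rintro ⟨xb, yb, hc, rfl⟩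
    exact ⟨yb, xb, hc.symm, corrCost_comm hd xb yb⟩

end Correspondence

section Subproblem

variable [DecidableEq α] {d : α → α → ℝ} {x y xb yb : List α}

theorem IsCorrespondence.exists_lastRunLen_eq (hd : ∀ a b, 0 ≤ d a b)
    (hx : x ≠ []) (hy : y ≠ []) (h : IsCorrespondence x y xb yb) :
    ∃ xb' yb', IsCorrespondence x y xb' yb' ∧ corrCost d xb' yb' ≤ corrCost d xb yb ∧
      (lastRunLen xb' = lastRunLen x ∨ lastRunLen yb' = lastRunLen y) := by
  induction hn : xb.length using Nat.strong_induction_on generalizing xb yb with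
  | _ n ih =>
    obtain ⟨hex, hey, hlen⟩ := h
    by_cases hlast : lastRunLen xb = lastRunLen x ∨ lastRunLen yb = lastRunLen y
    · exact ⟨xb, yb, ⟨hex, hey, hlen⟩, le_rfl, hlast⟩
    rw [not_or] at hlast
    have hltx := (hex.lastRunLen_le hx).lt_of_ne' hlast.1
    have hlty := (hey.lastRunLen_le hy).lt_of_ne' hlast.2
    obtain ⟨xb', yb', hc, hcost, hlast'⟩ := ih (n - 1)
      (by have := length_pos_iff.2 (hex.ne_nil hx); omega)
      ⟨hex.dropLast hx hltx, hey.dropLast hy hlty, by simp [hlen]⟩ (by simp [hn])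
    exact ⟨xb', yb', hc, hcost.trans (corrCost_dropLast_le hd hlen), hlast'⟩

theorem firstRuns_numRuns (x : List α) : firstRuns (numRuns x) x = x := by
  rw [firstRuns, numRuns, take_length]
  exact flatten_splitBy _ x

theorem runPrefix_numRuns_lastRunLen (hy : y ≠ []) :
    runPrefix (numRuns y) (lastRunLen y) y = y := by
  obtain ⟨runs, r, hr⟩ := (eq_nil_or_concat (runsOf y)).resolve_left (splitBy_ne_nil.2 hy)
  have hflat : runs.flatten ++ r = y := by
    have h := flatten_splitBy (· == ·) y
    rwa [← runsOf, hr, concat_eq_append, flatten_append, flatten_singleton] at h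
  simp [runPrefix, firstRuns, numRuns, lastRunLen, hr, hflat]

theorem dtw_le_SP (hd : ∀ a b, 0 ≤ d a b) (hy : y ≠ []) :
    (dtw d x y : EReal) ≤ SP d x y (numRuns x) (numRuns y) (lastRunLen y) := by
  rw [SP, firstRuns_numRuns, runPrefix_numRuns_lastRunLen hy]
  refine le_sInf ?_
  rintro _ ⟨⟨xb, yb⟩, ⟨hc, -⟩, rfl⟩
  exact EReal.coe_le_coe_iff.2 (dtw_le_corrCost hd hc)

theorem SP_le_corrCost (hy : y ≠ []) (h : IsCorrespondence x y xb yb)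
    (hlast : lastRunLen yb = lastRunLen y) :
    SP d x y (numRuns x) (numRuns y) (lastRunLen y) ≤ corrCost d xb yb := by
  rw [SP, firstRuns_numRuns, runPrefix_numRuns_lastRunLen hy]
  exact sInf_le ⟨(xb, yb), ⟨h, fun _ => hlast⟩, rfl⟩

end Subproblem

/-- If `x` has `s` runs with final run of length `j` and `y` has `t` runs with
final run of length `k`, then `dtw(x, y) = min(SP(x, y, s, t, k), SP(y, x, t, s, j))`. -/
theorem stmt17 [MetricSpace α] [DecidableEq α] (x y : List α)
    (hx : x ≠ []) (hy : y ≠ []) (s t j k : ℕ)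
    (hs : numRuns x = s) (ht : numRuns y = t)
    (hj : lastRunLen x = j) (hk : lastRunLen y = k) :
    ((dtw dist x y : ℝ) : EReal) = min (SP dist x y s t k) (SP dist y x t s j) := by
  subst hs ht hj hk
  have hd : ∀ a b : α, 0 ≤ dist a b := fun _ _ => dist_nonneg
  refine le_antisymm (le_min (dtw_le_SP hd hy) (dtw_comm dist_comm x y ▸ dtw_le_SP hd hx))
    (le_dtw hx hy fun xb yb hc => ?_)
  obtain ⟨xb', yb', hc', hcost, hlast⟩ := hc.exists_lastRunLen_eq hd hx hy
  refine le_trans ?_ (EReal.coe_le_coe_iff.2 hcost)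
  rcases hlast with hlast | hlast
  · rw [corrCost_comm dist_comm]
    exact min_le_of_right_le (SP_le_corrCost hx hc'.symm hlast)
  · exact min_le_of_left_le (SP_le_corrCost hy hc' hlast)
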